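/- For s ∈ (√2, 2], the second iterate T_s² restricted to the core [c₂, c₁] is not renormalizable in the following sense: there is no proper subinterval J ⊂ [c₂, c₁] containing c = 1/2 in its interior with T_s²(J) ⊆ J and J ≠ [c₂, c₁]; equivalently, T_s²(J) ⊆ J and c ∈ int(J) imply J ⊇ [c₂, c₁]. (A concrete special case: for s ∈ (√2, 2], the fixed point p = s/(1+s) of T_s satisfies T_s²([1−p, p]) ⊄ [1−p, p] unless [1−p,p] ⊇ [c₂,c₁].) -/

import Mathlib

/-! Since `c₂ = T²(c)` lies in `J`, it suffices to find a preimage `x ∈ J` of `c` under `T`,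
for then `c₁ = T²(x) ∈ J`. If `c₂ ≤ 1/(2s)`, the left preimage `1/(2s)` lies in `[c₂, c] ⊆ J`.
Otherwise `T²` is the affine map `x ↦ p + s²(x - p)`, expanding about the fixed point
`p = s/(1+s)`, on `[c, 1 - 1/(2s)]`, and `T²(c₂) = T²(1 - c₂) > p` because `s > √2` forces
`c₂ < 1 - p`. An invariant set containing a point to the right of `p` cannot stay inside a region
where `T²` expands away from `p`, so `J` reaches the right preimage `1 - 1/(2s)`. -/

open Set

noncomputable def tent (s x : ℝ) : ℝ := min (s * x) (s * (1 - x))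

lemma exists_ge_of_mapsTo_of_expanding {f : ℝ → ℝ} {J : Set ℝ} {p q r k : ℝ}
    (hf : MapsTo f J J) (hq : q ∈ J) (hpq : p < q) (hk : 1 < k)
    (hexp : ∀ x ∈ Ioc p r, p + k * (x - p) ≤ f x) : ∃ y ∈ J, r ≤ y := by
  by_contra! hlt
  have hbdd : BddAbove J := ⟨r, fun y hy => (hlt y hy).le⟩
  set b := sSup J
  have hqb : q ≤ b := le_csSup hbdd hq
  have hb : b ≤ p + (b - p) / k := by
    refine csSup_le ⟨q, hq⟩ fun x hx => ?_
    rcases le_or_gt x p with hxp | hpx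
    · have : 0 ≤ (b - p) / k := div_nonneg (by linarith) (by linarith)
      linarith
    · have hfx : p + k * (x - p) ≤ b :=
        (hexp x ⟨hpx, (hlt x hx).le⟩).trans (le_csSup hbdd (hf hx))
      have : x - p ≤ (b - p) / k := (le_div_iff₀ (by linarith)).mpr (by linarith)
      linarith
  have : (b - p) * k ≤ b - p := (le_div_iff₀ (by linarith)).mp (by linarith)
  nlinarith

section tent

variable {s x : ℝ}

lemma tent_of_le_half (hs : 0 ≤ s) (hx : x ≤ 1 / 2) : tent s x = s * x :=
  min_eq_left (by nlinarith)

lemma tent_of_half_le (hs : 0 ≤ s) (hx : 1 / 2 ≤ x) : tent s x = s * (1 - x) :=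
  min_eq_right (by nlinarith)

lemma tent_one_sub (s x : ℝ) : tent s (1 - x) = tent s x := by
  rw [tent, tent, sub_sub_cancel, min_comm]

lemma tent_half (s : ℝ) : tent s (1 / 2) = s / 2 := by
  norm_num [tent]
  ring

lemma one_div_two_mul_le_half (hs : 1 ≤ s) : 1 / (2 * s) ≤ 1 / 2 := by
  rw [div_le_div_iff₀ (by linarith) two_pos]
  linarith

lemma tent_one_div_two_mul (hs : 1 ≤ s) : tent s (1 / (2 * s)) = 1 / 2 := by
  rw [tent_of_le_half (by linarith) (one_div_two_mul_le_half hs)]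
  field_simp

lemma tent_tent_of_mem_Icc (hs : 0 < s) (hx : x ∈ Icc (1 / 2) (1 - 1 / (2 * s))) :
    tent s (tent s x) = s / (1 + s) + s ^ 2 * (x - s / (1 + s)) := by
  have hTx : 1 / 2 ≤ s * (1 - x) := by
    have h := mul_le_mul_of_nonneg_left (le_sub_comm.mp hx.2) hs.le
    have : s * (1 / (2 * s)) = 1 / 2 := by field_simp
    linarith
  rw [tent_of_half_le hs.le hx.1, tent_of_half_le hs.le hTx]
  field_simp
  ring

lemma half_le_div_one_add (hs : 1 ≤ s) : 1 / 2 ≤ s / (1 + s) := by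
  rw [div_le_div_iff₀ two_pos (by linarith)]
  linarith

lemma tent_tent_half (hs : 1 ≤ s) : tent s (tent s (1 / 2)) = s * (1 - s / 2) := by
  rw [tent_half, tent_of_half_le (by linarith) (by linarith)]

lemma tent_tent_expanding (hs : 1 ≤ s) :
    ∀ x ∈ Ioc (s / (1 + s)) (1 - 1 / (2 * s)),
      s / (1 + s) + s ^ 2 * (x - s / (1 + s)) ≤ tent s (tent s x) := fun x hx =>
  (tent_tent_of_mem_Icc (by linarith)
    ⟨(half_le_div_one_add hs).trans hx.1.le, hx.2⟩).ge

/-- This is where `s > √2` enters: the core `[c₂, c₁]` is wider than `[1 - p, p]`. -/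
lemma core_left_lt_one_sub_fixedPoint (hs : √2 < s) : s * (1 - s / 2) < 1 - s / (1 + s) := by
  have hs0 : 0 < s := (Real.sqrt_nonneg 2).trans_lt hs
  have hs2 : 2 < s ^ 2 := (Real.sqrt_lt' hs0).mp hs
  have hs1 : 1 < s := by nlinarith
  rw [← sub_pos]
  have : 1 - s / (1 + s) - s * (1 - s / 2) = (s - 1) * (s ^ 2 - 2) / (2 * (1 + s)) := by
    field_simp
    ring
  rw [this]
  exact div_pos (mul_pos (by linarith) (by linarith)) (by linarith)

lemma fixedPoint_lt_tent_tent_core_left (hs : √2 < s) (h : 1 / (2 * s) < s * (1 - s / 2)) :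
    s / (1 + s) < tent s (tent s (s * (1 - s / 2))) := by
  have hs1 : 1 < s := Real.one_lt_sqrt_two.trans hs
  have hp_lt : s / (1 + s) < 1 - s * (1 - s / 2) := by
    linarith [core_left_lt_one_sub_fixedPoint hs]
  have hcore_le : s * (1 - s / 2) ≤ 1 / 2 := by nlinarith
  rw [← tent_one_sub s (s * (1 - s / 2)), tent_tent_of_mem_Icc (by linarith)
    ⟨by linarith, by linarith⟩]
  exact lt_add_of_pos_right _ (mul_pos (by positivity) (by linarith))

end tent

theorem tent_not_renormalizable_general (s : ℝ) (hs : s ∈ Set.Ioc (Real.sqrt 2) 2)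
    (J : Set ℝ) (hJint : J.OrdConnected)
    (hc : (1:ℝ) / 2 ∈ interior J)
    (hinv : Set.MapsTo (tent s ∘ tent s) J J) :
    Set.Icc (s * (1 - s / 2)) (s / 2) ⊆ J := by
  obtain ⟨hs_sqrt, -⟩ := hs
  have hs1 : 1 < s := Real.one_lt_sqrt_two.trans hs_sqrt
  have hhalf : (1 : ℝ) / 2 ∈ J := interior_subset hc
  have hc₂ : s * (1 - s / 2) ∈ J := tent_tent_half hs1.le ▸ hinv hhalf
  suffices hpre : ∃ x ∈ J, tent s x = 1 / 2 by
    obtain ⟨x, hx, hTx⟩ := hpre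
    have hc₁ : s / 2 ∈ J := by simpa only [Function.comp_apply, hTx, tent_half] using hinv hx
    exact hJint.out hc₂ hc₁
  rcases le_or_gt (s * (1 - s / 2)) (1 / (2 * s)) with hle | hlt
  · exact ⟨1 / (2 * s), hJint.out hc₂ hhalf ⟨hle, one_div_two_mul_le_half hs1.le⟩,
      tent_one_div_two_mul hs1.le⟩
  · obtain ⟨y, hy, hry⟩ := exists_ge_of_mapsTo_of_expanding hinv (hinv hc₂)
      (fixedPoint_lt_tent_tent_core_left hs_sqrt hlt) (by nlinarith) (tent_tent_expanding hs1.le)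
    have hr : 1 / 2 ≤ 1 - 1 / (2 * s) := by linarith [one_div_two_mul_le_half hs1.le]
    refine ⟨1 - 1 / (2 * s), hJint.out hhalf hy ⟨hr, hry⟩, ?_⟩
    rw [tent_one_sub, tent_one_div_two_mul hs1.le]

/-- For s ∈ (√2, 2], the tent map is not renormalizable: any subinterval `J` of the core
`[c₂, c₁]` containing `c = 1/2` in its interior and invariant under `T_s²` must be the
whole core. -/
theorem tent_not_renormalizable (s : ℝ) (hs : s ∈ Set.Ioc (Real.sqrt 2) 2)
    (J : Set ℝ) (hJint : J.OrdConnected)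
    (hJsub : J ⊆ Set.Icc (s * (1 - s / 2)) (s / 2))
    (hc : (1:ℝ) / 2 ∈ interior J)
    (hinv : Set.MapsTo (tent s ∘ tent s) J J) :
    Set.Icc (s * (1 - s / 2)) (s / 2) ⊆ J :=
  tent_not_renormalizable_general s hs J hJint hc hinv
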